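/- For every partition μ ⊆ n×n that is the complement of a rectangle i×j with both i < n and j < n, and every partition λ_s = (n^{n-s}, (n-1)^{s-1}) with 1 ≤ s ≤ n, one has maxdiag(μ \ λ_s) = 1; consequently the value maxdiag(μ\λ_s) (if μ = μ^T) or maxdiag(μ\λ_s) + maxdiag(μ^T\λ_s) (if μ ≠ μ^T) is independent of s. -/

import Mathlib

/-- `maxdiag S`: the maximal number of boxes of `S` on a single diagonal of slope `-1`. -/
def maxdiag (S : Finset (ℕ × ℕ)) : ℕ :=
  S.sup fun p => (S.filter fun q => q.1 + p.2 = q.2 + p.1).card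

/-- The boxes of the Young diagram of `f` inside the `n×n` square. -/
def boxesOf (n : ℕ) (f : ℕ → ℕ) : Finset (ℕ × ℕ) :=
  (Finset.Icc 1 n ×ˢ Finset.Icc 1 n).filter fun p => p.2 ≤ f p.1

/-- The partition `λ_s = (n^{n-s}, (n-1)^{s-1})`. -/
def lamJ (n s : ℕ) : ℕ → ℕ :=
  fun r => if r ≤ n - s then n else if r ≤ n - 1 then n - 1 else 0

/-- The complement of an `i×j` rectangle, right-justified in the `n×n` square:
the partition `(n^{n-i}, (n-j)^i)`. -/
def muC (n i j : ℕ) : ℕ → ℕ := fun r => if r ≤ n - i then n else n - j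

/-!
Since `λ_s` has at least `n - 1` boxes in each of its first `n - 1` rows, the skew shape
`μ \ λ_s` lies in the hook formed by the last row and the last column of the square, and a
hook meets every diagonal at most once. The box `(n, 1)` lies in `μ \ λ_s` because `j < n`
and `1 ≤ s`, so `maxdiag (μ \ λ_s) = 1` for every `s`, and the independence of `s` follows.
-/

lemma maxdiag_eq_one {S : Finset (ℕ × ℕ)} (hS : S.Nonempty)
    (hdiag : ∀ p ∈ S, ∀ q ∈ S, q.1 + p.2 = q.2 + p.1 → q = p) : maxdiag S = 1 := by
  have hsingle : ∀ p ∈ S, (S.filter fun q => q.1 + p.2 = q.2 + p.1) = {p} := fun p hp =>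
    Finset.eq_singleton_iff_unique_mem.mpr
      ⟨Finset.mem_filter.mpr ⟨hp, by omega⟩,
        fun q hq => hdiag p hp q (Finset.mem_filter.mp hq).1 (Finset.mem_filter.mp hq).2⟩
  calc maxdiag S = S.sup fun _ => 1 :=
        Finset.sup_congr rfl fun p hp => by rw [hsingle p hp, Finset.card_singleton]
    _ = 1 := Finset.sup_const hS 1

lemma mem_boxesOf_sdiff {n : ℕ} {f g : ℕ → ℕ} {p : ℕ × ℕ} :
    p ∈ boxesOf n f \ boxesOf n g ↔
      (1 ≤ p.1 ∧ p.1 ≤ n) ∧ (1 ≤ p.2 ∧ p.2 ≤ n) ∧ p.2 ≤ f p.1 ∧ g p.1 < p.2 := by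
  simp only [boxesOf, Finset.mem_sdiff, Finset.mem_filter, Finset.mem_product, Finset.mem_Icc]
  omega

lemma maxdiag_boxesOf_sdiff_eq_one {n : ℕ} {f g : ℕ → ℕ} (hg : ∀ r < n, n - 1 ≤ g r)
    (hne : (boxesOf n f \ boxesOf n g).Nonempty) : maxdiag (boxesOf n f \ boxesOf n g) = 1 := by
  have hhook : ∀ p ∈ boxesOf n f \ boxesOf n g, p.1 ≤ n ∧ p.2 ≤ n ∧ (p.1 = n ∨ p.2 = n) := by
    intro p hp
    obtain ⟨⟨-, hp1⟩, ⟨-, hp2⟩, -, hgp⟩ := mem_boxesOf_sdiff.mp hp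
    by_cases hlt : p.1 < n
    · have := hg p.1 hlt
      omega
    · omega
  refine maxdiag_eq_one hne fun p hp q hq hpq => ?_
  have := hhook p hp
  have := hhook q hq
  ext <;> omega

lemma sub_one_le_lamJ {n s r : ℕ} (hr : r < n) : n - 1 ≤ lamJ n s r := by
  unfold lamJ
  split_ifs <;> omega

lemma mem_boxesOf_muC_sdiff_lamJ {n i j s : ℕ} (hj : j < n) (hs : 1 ≤ s) :
    (n, 1) ∈ boxesOf n (muC n i j) \ boxesOf n (lamJ n s) := by
  rw [mem_boxesOf_sdiff]
  unfold muC lamJ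
  split_ifs <;> omega

lemma maxdiag_muC_sdiff_lamJ {n i j s : ℕ} (hj : j < n) (hs : 1 ≤ s) :
    maxdiag (boxesOf n (muC n i j) \ boxesOf n (lamJ n s)) = 1 :=
  maxdiag_boxesOf_sdiff_eq_one (fun _ => sub_one_le_lamJ) ⟨_, mem_boxesOf_muC_sdiff_lamJ hj hs⟩

/-- For `μ` the complement of an `i×j` rectangle with `i < n` and `j < n`, and
`λ_s = (n^{n-s}, (n-1)^{s-1})` with `1 ≤ s ≤ n`, one has `maxdiag(μ\λ_s) = 1`;
consequently the value `maxdiag(μ\λ_s)` (if `μ = μ^T`) resp.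
`maxdiag(μ\λ_s) + maxdiag(μ^T\λ_s)` (if `μ ≠ μ^T`) is independent of `s`. -/
theorem stmt_12 (n i j : ℕ) (hi : i < n) (hj : j < n) :
    (∀ s : ℕ, 1 ≤ s → s ≤ n →
      maxdiag (boxesOf n (muC n i j) \ boxesOf n (lamJ n s)) = 1) ∧
    (muC n i j = muC n j i →
      ∀ s s' : ℕ, 1 ≤ s → s ≤ n → 1 ≤ s' → s' ≤ n →
        maxdiag (boxesOf n (muC n i j) \ boxesOf n (lamJ n s)) =
          maxdiag (boxesOf n (muC n i j) \ boxesOf n (lamJ n s'))) ∧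
    (muC n i j ≠ muC n j i →
      ∀ s s' : ℕ, 1 ≤ s → s ≤ n → 1 ≤ s' → s' ≤ n →
        maxdiag (boxesOf n (muC n i j) \ boxesOf n (lamJ n s)) +
            maxdiag (boxesOf n (muC n j i) \ boxesOf n (lamJ n s)) =
          maxdiag (boxesOf n (muC n i j) \ boxesOf n (lamJ n s')) +
            maxdiag (boxesOf n (muC n j i) \ boxesOf n (lamJ n s'))) := by
  refine ⟨fun s hs _ => maxdiag_muC_sdiff_lamJ hj hs, ?_, ?_⟩
  · intro _ s s' hs _ hs' _
    rw [maxdiag_muC_sdiff_lamJ hj hs, maxdiag_muC_sdiff_lamJ hj hs']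
  · intro _ s s' hs _ hs' _
    rw [maxdiag_muC_sdiff_lamJ hj hs, maxdiag_muC_sdiff_lamJ hj hs',
      maxdiag_muC_sdiff_lamJ hi hs, maxdiag_muC_sdiff_lamJ hi hs']
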